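/- arXiv:1804.01711 — 4 statements merged into one kernel-verified Lean document; each statement's English description precedes it below -/
import Mathlib

section
/- Single-time-block reduced Bellman operator (discrete case): suppose for r < t a state reduction (θ_r, θ_t, f_{r:t}) across [r,t] exists and is compatible with the stochastic kernels ρ_{s-1,s} for s = r+1,...,t (each ρ_{s-1,s}(h_{s-1},·) factors as ρ̃_{s-1,s}((θ_r(h_r), h_{r+1:s-1}), ·) when h_{s-1} = (h_r, h_{r+1:s-1})). Then for every nonnegative φ̃_t : X_t → [0,∞], the composed Bellman operator B_{t:r} = B_{r+1:r} ∘ ··· ∘ B_{t:t-1}, defined on functions of histories via (B_{s+1:s} φ)(h_s) = inf_{u_s} Σ_{w_{s+1}} φ(h_s,u_s,w_{s+1}) ρ_{s,s+1}(h_s,{w_{s+1}}), satisfies B_{t:r}(φ̃_t ∘ θ_t) = (B̃_{t:r} φ̃_t) ∘ θ_r for some operator B̃_{t:r} mapping nonnegative functions on X_t to nonnegative functions on X_r. -/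
open scoped ENNReal

/-- History space `H_t = W_0 × ∏_{s=0}^{t-1}(U_s × W_{s+1})`. -/
def Hist (W U : ℕ → Type) : ℕ → Type :=
  fun t => Nat.rec (motive := fun _ => Type) (W 0) (fun s ih => ih × U s × W (s + 1)) t

/-- Transport of a history along an equality of time indices. -/
def hcast {W U : ℕ → Type} {a b : ℕ} (e : a = b) (h : Hist W U a) : Hist W U b := e ▸ h

/-- Partial history space `H_{t+1:t+n} = ∏_{m=0}^{n-1}(U_{t+m} × W_{t+m+1})`. -/
def PartHistE (W U : ℕ → Type) (t : ℕ) : ℕ → Type :=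
  fun n => Nat.rec (motive := fun _ => Type) PUnit (fun m ih => ih × U (t + m) × W (t + m + 1)) n

/-- Splitting a history `h_{t+n} ∈ H_{t+n}` as `(h_t, h_{t+1:t+n}) ∈ H_t × H_{t+1:t+n}`. -/
def splitE {W U : ℕ → Type} : ∀ (n t : ℕ), Hist W U (t + n) → Hist W U t × PartHistE W U t n
  | 0, _, h => (h, PUnit.unit)
  | n + 1, t, h => ((splitE n t h.1).1, ((splitE n t h.1).2, h.2.1, h.2.2))

/-- The composed Bellman operator `B_{t+n:t} = B_{t+1:t} ∘ ⋯ ∘ B_{t+n:t+n-1}` on nonnegative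
functions of histories, where the one-step operator is
`(B_{s+1:s} φ)(h_s) = inf_{u_s} Σ_{w_{s+1}} φ(h_s,u_s,w_{s+1}) ρ_{s,s+1}(h_s,{w_{s+1}})`. -/
noncomputable def hBell {W U : ℕ → Type} (ρ : ∀ s, Hist W U s → W (s + 1) → ℝ≥0∞) :
    ∀ (n t : ℕ), (Hist W U (t + n) → ℝ≥0∞) → Hist W U t → ℝ≥0∞
  | 0, _, φ, h => φ h
  | n + 1, t, φ, h =>
      ⨅ u : U t, ∑' w : W (t + 1),
        hBell ρ n (t + 1) (fun h' => φ (hcast (by omega) h')) (h, u, w) * ρ t h w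

section Aux
variable {W U : ℕ → Type}

theorem hcast_hcast {a b : ℕ} (e : a = b) (g : Hist W U b) :
    hcast e (hcast e.symm g) = g := by subst e; rfl

def consP : ∀ (m t : ℕ), (U t × W (t + 1)) → PartHistE W U (t + 1) m → PartHistE W U t (m + 1)
  | 0, _, uw, _ => (PUnit.unit, uw)
  | m + 1, t, uw, p =>
      (consP m t uw p.1, cast (congrArg U (Nat.add_right_comm t 1 m)) p.2.1,
        cast (congrArg (fun x => W (x + 1)) (Nat.add_right_comm t 1 m)) p.2.2)

theorem hcast_succ {a b : ℕ} (e : a + 1 = b + 1) (h : Hist W U (a + 1)) :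
    hcast e h = (hcast (Nat.succ_injective e) h.1,
      cast (congrArg U (Nat.succ_injective e)) h.2.1,
      cast (congrArg (fun x => W (x + 1)) (Nat.succ_injective e)) h.2.2) := by
  have e' : a = b := Nat.succ_injective e
  subst e'
  rfl

theorem split_succ : ∀ (m t : ℕ) (e : t + (m + 1) = (t + 1) + m) (h : Hist W U (t + (m + 1))),
    (splitE m (t + 1) (hcast e h)).1.1 = (splitE (m + 1) t h).1 ∧
    (splitE (m + 1) t h).2 =
      consP m t (splitE m (t + 1) (hcast e h)).1.2 (splitE m (t + 1) (hcast e h)).2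
  | 0, t, e, h => by
      have he : hcast e h = h := rfl
      rw [he]
      exact ⟨rfl, rfl⟩
  | m + 1, t, e, h => by
      rw [hcast_succ e h]
      obtain ⟨ih1, ih2⟩ := split_succ m t (Nat.succ_injective e) h.1
      constructor
      · exact ih1
      · show ((splitE (m + 1) t h.1).2, h.2.1, h.2.2) = _
        simp only [splitE, consP, cast_cast]
        rw [← ih2]
        rfl

theorem rho_cast (ρ : ∀ s, Hist W U s → W (s + 1) → ℝ≥0∞) {a b : ℕ} (e : a = b)
    (g : Hist W U b) (w : W (b + 1)) :
    ρ b g w = ρ a (hcast e.symm g) (cast (congrArg (fun x => W (x + 1)) e.symm) w) := by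
  subst e; rfl

theorem bell_cong (ρ : ∀ s, Hist W U s → W (s + 1) → ℝ≥0∞) :
    ∀ (n t : ℕ) {Y : Type} (θ : Hist W U t → Y) (φ : Hist W U (t + n) → ℝ≥0∞),
      (∀ g g' : Hist W U (t + n), θ (splitE n t g).1 = θ (splitE n t g').1 →
        (splitE n t g).2 = (splitE n t g').2 → φ g = φ g') →
      (∀ m, m < n → ∀ (g g' : Hist W U (t + m)) (w : W (t + m + 1)),
        θ (splitE m t g).1 = θ (splitE m t g').1 →
        (splitE m t g).2 = (splitE m t g').2 → ρ (t + m) g w = ρ (t + m) g' w) →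
      ∀ h h' : Hist W U t, θ h = θ h' → hBell ρ n t φ h = hBell ρ n t φ h'
  | 0, t, Y, θ, φ, hφ, _, h, h', hθ => hφ h h' hθ rfl
  | n + 1, t, Y, θ, φ, hφ, hρ, h, h', hθ => by
      have E : ∀ m : ℕ, t + (m + 1) = (t + 1) + m := fun m => Nat.add_right_comm t m 1
      simp only [hBell]
      refine iInf_congr fun u => tsum_congr fun w => ?_
      have h0 : ρ t h w = ρ t h' w := hρ 0 (Nat.succ_pos n) h h' w hθ rfl
      rw [h0]
      congr 1
      refine bell_cong ρ n (t + 1)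
        (Y := Y × U t × W (t + 1)) (fun g => (θ g.1, g.2.1, g.2.2)) _ ?_ ?_
        (h, u, w) (h', u, w) (by show (θ h, u, w) = (θ h', u, w); rw [hθ])
      · -- hφ'
        intro g g' h1 h2
        have hg : hcast (E n) (hcast (E n).symm g) = g := hcast_hcast _ g
        have hg' : hcast (E n) (hcast (E n).symm g') = g' := hcast_hcast _ g'
        obtain ⟨s1, s2⟩ := split_succ n t (E n) (hcast (E n).symm g)
        obtain ⟨s1', s2'⟩ := split_succ n t (E n) (hcast (E n).symm g')
        rw [hg] at s1 s2
        rw [hg'] at s1' s2'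
        refine hφ (hcast (E n).symm g) (hcast (E n).symm g') ?_ ?_
        · rw [← s1, ← s1']
          exact congrArg Prod.fst h1
        · rw [s2, s2']
          have hu : (splitE n (t + 1) g).1.2 = (splitE n (t + 1) g').1.2 :=
            congrArg (fun p : Y × U t × W (t + 1) => (p.2.1, p.2.2)) h1
          rw [hu, h2]
      · -- hρ'
        intro m hm g g' w' h1 h2
        rw [rho_cast ρ (E m) g w', rho_cast ρ (E m) g' w']
        have hg : hcast (E m) (hcast (E m).symm g) = g := hcast_hcast _ g
        have hg' : hcast (E m) (hcast (E m).symm g') = g' := hcast_hcast _ g'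
        obtain ⟨s1, s2⟩ := split_succ m t (E m) (hcast (E m).symm g)
        obtain ⟨s1', s2'⟩ := split_succ m t (E m) (hcast (E m).symm g')
        rw [hg] at s1 s2
        rw [hg'] at s1' s2'
        refine hρ (m + 1) (by omega) _ _ _ ?_ ?_
        · rw [← s1, ← s1']
          exact congrArg Prod.fst h1
        · rw [s2, s2']
          have hu : (splitE m (t + 1) g).1.2 = (splitE m (t + 1) g').1.2 :=
            congrArg (fun p : Y × U t × W (t + 1) => (p.2.1, p.2.2)) h1
          rw [hu, h2]

end Aux

/-- single-time-block reduced Bellman operator (discrete case). If a state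
reduction `(θ_r, θ_{r+n}, f)` across `[r, r+n]` (with `r < r+n`) exists and is compatible with
the kernels `ρ_{s-1,s}`, `r+1 ≤ s ≤ r+n` (each factors through `(θ_r(h_r), h_{r+1:s-1})` via a
reduced kernel `ρ̃`), then for every nonnegative `φ̃ : X_t → [0,∞]`, the composed Bellman
operator satisfies `B_{t:r}(φ̃ ∘ θ_t) = (B̃_{t:r} φ̃) ∘ θ_r` for some operator `B̃_{t:r}` mapping
nonnegative functions on `X_t` to nonnegative functions on `X_r`. -/
theorem single_block_reduction {W U : ℕ → Type}
    [∀ s, Countable (W s)] [∀ s, Nonempty (W s)] [∀ s, Nonempty (U s)]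
    {Xr Xt : Type}
    (ρ : ∀ s, Hist W U s → W (s + 1) → ℝ≥0∞)
    (hpmf : ∀ s (h : Hist W U s), ∑' w : W (s + 1), ρ s h w = 1)
    (r n : ℕ) (hn : 0 < n)
    (θr : Hist W U r → Xr) (θt : Hist W U (r + n) → Xt)
    (f : Xr → PartHistE W U r n → Xt)
    (hred : ∀ h : Hist W U (r + n), θt h = f (θr (splitE n r h).1) (splitE n r h).2)
    (ρt : ∀ m, Xr → PartHistE W U r m → W (r + m + 1) → ℝ≥0∞)
    (hcomp : ∀ m, m < n → ∀ (h : Hist W U (r + m)) (w : W (r + m + 1)),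
      ρ (r + m) h w = ρt m (θr (splitE m r h).1) (splitE m r h).2 w) :
    ∃ Bt : (Xt → ℝ≥0∞) → Xr → ℝ≥0∞,
      ∀ (φt : Xt → ℝ≥0∞) (h : Hist W U r),
        hBell ρ n r (fun h' => φt (θt h')) h = Bt φt (θr h) := by
    classical
  refine ⟨fun φt x =>
    if hx : ∃ h : Hist W U r, θr h = x then
      hBell ρ n r (fun h' => φt (θt h')) hx.choose else 0, fun φt h => ?_⟩
  have hex : ∃ g : Hist W U r, θr g = θr h := ⟨h, rfl⟩
  show _ = dite _ _ _
  rw [dif_pos hex]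
  refine bell_cong ρ n r θr _ ?_ ?_ h hex.choose hex.choose_spec.symm
  · intro g g' h1 h2
    simp only [hred, h1, h2]
  · intro m hm g g' w h1 h2
    rw [hcomp m hm g w, hcomp m hm g' w, h1, h2]
end

section
/- Backward induction for value functions with history state (discrete, finite horizon): define, for t = 0,...,T-1 and h_t ∈ H_t, V_t(h_t) = inf over history feedbacks γ_{t:T-1} of E[j(flow from h_t under γ and the noise)] where the noise w_{t+1},...,w_T is drawn successively from the kernels ρ_{s,s+1} evaluated at the running history, and V_T = j for a nonnegative criterion j : H_T → [0,∞]. Then V_t(h_t) = inf_{u_t ∈ U_t} Σ_{w_{t+1} ∈ W_{t+1}} V_{t+1}(h_t, u_t, w_{t+1}) ρ_{t,t+1}(h_t, {w_{t+1}}) for all t = 0,...,T-1 and h_t ∈ H_t. -/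
open scoped ENNReal

/-- Noise sequences `w_{t+1:t+n}`. -/
def NoiseSeqE (W : ℕ → Type) (t : ℕ) : ℕ → Type :=
  fun n => Nat.rec (motive := fun _ => Type) PUnit (fun m ih => ih × W (t + m + 1)) n

/-- The flow `Φ_{t,t+n}^γ` generated by a family of history feedbacks `γ`. -/
def flowE {W U : ℕ → Type} (γ : ∀ s, Hist W U s → U s) :
    ∀ (n t : ℕ), Hist W U t → NoiseSeqE W t n → Hist W U (t + n)
  | 0, _, h, _ => h
  | n + 1, t, h, ws =>
      (flowE γ n t h ws.1, γ (t + n) (flowE γ n t h ws.1), ws.2)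

/-- The product `∏_{s=t+1}^{t+n} ρ_{s-1,s}(Φ_{t,s-1}^γ(h_t, w_{t+1:s-1}), {w_s})` of the
one-step kernels evaluated along the flow. -/
noncomputable def probE {W U : ℕ → Type} (ρ : ∀ s, Hist W U s → W (s + 1) → ℝ≥0∞)
    (γ : ∀ s, Hist W U s → U s) :
    ∀ (n t : ℕ), Hist W U t → NoiseSeqE W t n → ℝ≥0∞
  | 0, _, _, _ => 1
  | n + 1, t, h, ws => probE ρ γ n t h ws.1 * ρ (t + n) (flowE γ n t h ws.1) ws.2

/-- The value function at time `t` (with `n = T - t` remaining steps): the infimum over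
history feedbacks of the expected criterion
`Σ_{w_{t+1:T}} j(Φ_{t,T}^γ(h_t, w_{t+1:T})) ∏_{s=t+1}^{T} ρ_{s-1,s}(⋯, {w_s})`. -/
noncomputable def Val {W U : ℕ → Type} (ρ : ∀ s, Hist W U s → W (s + 1) → ℝ≥0∞)
    (T : ℕ) (j : Hist W U T → ℝ≥0∞) (n t : ℕ) (e : t + n = T) (h : Hist W U t) : ℝ≥0∞ :=
  ⨅ γ : ∀ s, Hist W U s → U s, ∑' ws : NoiseSeqE W t n,
    j (hcast e (flowE γ n t h ws)) * probE ρ γ n t h ws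

/-!
Peeling off the first noise `w_{t+1}` writes the expected cost of a feedback `γ` from `h_t` as
`Σ_w ρ_{t,t+1}(h_t, w) · C(γ, (h_t, γ_t(h_t), w))`, where `C(γ, h_{t+1})` is the expected cost
from time `t + 1`. Since the flow from `h_{t+1}` only consults `γ` on histories extending
`h_{t+1}`, feedbacks can be chosen independently on each branch `w`: given the first decision
`u` and feedbacks `φ w`, the pasted feedback plays `u` at time `t` and `φ w` after observing `w`.
Hence the infimum over `γ` splits into an infimum over `u` of a finite sum of infima, and the
latter are the values `V_{t+1}`.
-/

abbrev Feedback (W U : ℕ → Type) : Type := ∀ s, Hist W U s → U s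

theorem ENNReal.sum_iInf_eq_iInf_sum {α Γ : Type*} [Nonempty Γ] (s : Finset α)
    (g : α → Γ → ℝ≥0∞) : ∑ a ∈ s, ⨅ γ, g a γ = ⨅ φ : α → Γ, ∑ a ∈ s, g a (φ a) := by
  classical
  have hdir (φ ψ : α → Γ) : ∃ χ : α → Γ, ∀ a, g a (χ a) ≤ g a (φ a) ∧ g a (χ a) ≤ g a (ψ a) :=
    ⟨fun a => if g a (φ a) ≤ g a (ψ a) then φ a else ψ a, fun a => by
      dsimp only
      split_ifs with hle
      exacts [⟨le_rfl, hle⟩, ⟨(not_le.mp hle).le, le_rfl⟩]⟩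
  rw [ENNReal.iInf_sum fun _ φ ψ => (hdir φ ψ).imp fun _ hχ a _ => hχ a]
  exact Finset.sum_congr rfl fun a _ =>
    ((Function.surjective_eval (β := fun _ => Γ) a).iInf_comp (g a)).symm

/-- `paste u φ` is a policy with first action `u` whose cost on branch `w` is that of `φ w`. -/
theorem iInf_sum_eq_iInf_sum_iInf {Γ U W : Type*} [Fintype W] [Nonempty Γ] (a : Γ → U)
    (paste : U → (W → Γ) → Γ) (C : Γ → U → W → ℝ≥0∞) (ha : ∀ u φ, a (paste u φ) = u)
    (hC : ∀ u φ w, C (paste u φ) u w = C (φ w) u w) {p : W → ℝ≥0∞} (hp : ∀ w, p w ≠ ∞) :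
    ⨅ γ, ∑ w, C γ (a γ) w * p w = ⨅ u, ∑ w, (⨅ γ, C γ u w) * p w := by
  refine le_antisymm (le_iInf fun u => ?_) (le_iInf fun γ => ?_)
  · have hsplit : ∑ w, (⨅ γ, C γ u w) * p w = ⨅ φ : W → Γ, ∑ w, C (φ w) u w * p w := by
      simp only [ENNReal.iInf_mul (fun h => absurd h (hp _))]
      exact ENNReal.sum_iInf_eq_iInf_sum _ fun w γ => C γ u w * p w
    rw [hsplit]
    exact le_iInf fun φ => iInf_le_of_le (paste u φ) (by simp only [ha, hC, le_rfl])
  · exact iInf_le_of_le (a γ) (Finset.sum_le_sum fun w _ => mul_le_mul_left (iInf_le _ γ) _)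

section

variable {W U : ℕ → Type}

def Hist.truncate : ∀ (m s : ℕ), Hist W U (s + m) → Hist W U s
  | 0, _, h => h
  | m + 1, s, h => Hist.truncate m s h.1

theorem Hist.truncate_hcast {s a b : ℕ} (hab : a = b) (e : s + a = s + b)
    (h : Hist W U (s + a)) : Hist.truncate b s (hcast e h) = Hist.truncate a s h := by
  subst hab; rfl

theorem hcast_hcast_s6 {a b c : ℕ} (e₁ : a = b) (e₂ : b = c) (h : Hist W U a) :
    hcast e₂ (hcast e₁ h) = hcast (e₁.trans e₂) h := by
  subst e₁; rfl

theorem Hist.truncate_flowE (γ : Feedback W U) :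
    ∀ (m s : ℕ) (h : Hist W U s) (ws : NoiseSeqE W s m), Hist.truncate m s (flowE γ m s h ws) = h
  | 0, _, _, _ => rfl
  | m + 1, s, h, ws => Hist.truncate_flowE γ m s h ws.1

def Feedback.EqOnExtensions (γ γ' : Feedback W U) (s : ℕ) (h : Hist W U s) : Prop :=
  ∀ (m : ℕ) (x : Hist W U (s + m)), Hist.truncate m s x = h → γ (s + m) x = γ' (s + m) x

theorem flowE_congr {γ γ' : Feedback W U} {s : ℕ} {h : Hist W U s}
    (hγ : γ.EqOnExtensions γ' s h) :
    ∀ (m : ℕ) (ws : NoiseSeqE W s m), flowE γ m s h ws = flowE γ' m s h ws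
  | 0, _ => rfl
  | m + 1, ws => by
      change (flowE γ m s h ws.1, γ (s + m) (flowE γ m s h ws.1), ws.2)
        = (flowE γ' m s h ws.1, γ' (s + m) (flowE γ' m s h ws.1), ws.2)
      rw [flowE_congr hγ m ws.1, hγ m _ (Hist.truncate_flowE γ' m s h ws.1)]

theorem probE_congr (ρ : ∀ s, Hist W U s → W (s + 1) → ℝ≥0∞) {γ γ' : Feedback W U} {s : ℕ}
    {h : Hist W U s} (hγ : γ.EqOnExtensions γ' s h) :
    ∀ (m : ℕ) (ws : NoiseSeqE W s m), probE ρ γ m s h ws = probE ρ γ' m s h ws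
  | 0, _ => rfl
  | m + 1, ws => by
      change probE ρ γ m s h ws.1 * ρ (s + m) (flowE γ m s h ws.1) ws.2
        = probE ρ γ' m s h ws.1 * ρ (s + m) (flowE γ' m s h ws.1) ws.2
      rw [probE_congr ρ hγ m ws.1, flowE_congr hγ m ws.1]

def NoiseSeqE.consEquiv (W : ℕ → Type) (t : ℕ) :
    ∀ n, (W (t + 1) × NoiseSeqE W (t + 1) n) ≃ NoiseSeqE W t (n + 1)
  | 0 => Equiv.prodComm _ _
  | n + 1 =>
      (Equiv.prodAssoc _ _ _).symm.trans
        (Equiv.prodCongr (NoiseSeqE.consEquiv W t n) (Equiv.cast (congrArg W (by omega))))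

def wcast {a b : ℕ} (e : a = b) (w : W a) : W b := cast (congrArg W e) w

theorem NoiseSeqE.consEquiv_succ {t n : ℕ} (w : W (t + 1)) (ws : NoiseSeqE W (t + 1) (n + 1)) :
    NoiseSeqE.consEquiv W t (n + 1) (w, ws)
      = ((NoiseSeqE.consEquiv W t n (w, ws.1), wcast (by omega) ws.2) :
          NoiseSeqE W t (n + 1 + 1)) := rfl

theorem hcast_snoc (γ : Feedback W U) {a b : ℕ} (e : a = b) (h : Hist W U a) (w : W (a + 1)) :
    ((hcast e h, γ b (hcast e h), wcast (by omega) w) : Hist W U (b + 1))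
      = hcast (by omega : a + 1 = b + 1) ((h, γ a h, w) : Hist W U (a + 1)) := by
  subst e; rfl

theorem kernel_hcast (ρ : ∀ s, Hist W U s → W (s + 1) → ℝ≥0∞) {a b : ℕ} (e : a = b)
    (h : Hist W U a) (w : W (a + 1)) : ρ b (hcast e h) (wcast (by omega) w) = ρ a h w := by
  subst e; rfl

theorem flowE_consEquiv (γ : Feedback W U) :
    ∀ (n t : ℕ) (h : Hist W U t) (w : W (t + 1)) (ws : NoiseSeqE W (t + 1) n),
      flowE γ (n + 1) t h (NoiseSeqE.consEquiv W t n (w, ws))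
        = hcast (by omega) (flowE γ n (t + 1) (h, γ t h, w) ws)
  | 0, _, _, _, _ => rfl
  | n + 1, t, h, w, ws => by
      rw [NoiseSeqE.consEquiv_succ]
      change (flowE γ (n + 1) t h (NoiseSeqE.consEquiv W t n (w, ws.1)),
          γ _ (flowE γ (n + 1) t h (NoiseSeqE.consEquiv W t n (w, ws.1))),
          wcast (by omega) ws.2) = _
      rw [flowE_consEquiv γ n t h w ws.1]
      exact hcast_snoc γ _ _ ws.2

theorem probE_consEquiv (ρ : ∀ s, Hist W U s → W (s + 1) → ℝ≥0∞) (γ : Feedback W U) :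
    ∀ (n t : ℕ) (h : Hist W U t) (w : W (t + 1)) (ws : NoiseSeqE W (t + 1) n),
      probE ρ γ (n + 1) t h (NoiseSeqE.consEquiv W t n (w, ws))
        = ρ t h w * probE ρ γ n (t + 1) (h, γ t h, w) ws
  | 0, t, h, w, _ => (one_mul (ρ t h w)).trans (mul_one _).symm
  | n + 1, t, h, w, ws => by
      rw [NoiseSeqE.consEquiv_succ]
      change probE ρ γ (n + 1) t h (NoiseSeqE.consEquiv W t n (w, ws.1)) *
          ρ _ (flowE γ (n + 1) t h (NoiseSeqE.consEquiv W t n (w, ws.1))) (wcast (by omega) ws.2)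
        = ρ t h w * (probE ρ γ n (t + 1) (h, γ t h, w) ws.1 *
          ρ _ (flowE γ n (t + 1) (h, γ t h, w) ws.1) ws.2)
      rw [probE_consEquiv ρ γ n t h w ws.1, flowE_consEquiv γ n t h w ws.1,
        kernel_hcast ρ, mul_assoc]

noncomputable def expectedCost (ρ : ∀ s, Hist W U s → W (s + 1) → ℝ≥0∞) (γ : Feedback W U)
    (n t : ℕ) (c : Hist W U (t + n) → ℝ≥0∞) (h : Hist W U t) : ℝ≥0∞ :=
  ∑' ws : NoiseSeqE W t n, c (flowE γ n t h ws) * probE ρ γ n t h ws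

theorem expectedCost_succ (ρ : ∀ s, Hist W U s → W (s + 1) → ℝ≥0∞) (γ : Feedback W U)
    (n t : ℕ) (c : Hist W U (t + (n + 1)) → ℝ≥0∞) (h : Hist W U t) :
    expectedCost ρ γ (n + 1) t c h
      = ∑' w : W (t + 1),
          expectedCost ρ γ n (t + 1) (fun x => c (hcast (by omega) x)) (h, γ t h, w) * ρ t h w := by
  simp only [expectedCost]
  rw [← (NoiseSeqE.consEquiv W t n).tsum_eq, ENNReal.tsum_prod']
  refine tsum_congr fun w => ?_
  rw [← ENNReal.tsum_mul_right]
  refine tsum_congr fun ws => ?_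
  rw [flowE_consEquiv, probE_consEquiv]
  ring

theorem expectedCost_congr (ρ : ∀ s, Hist W U s → W (s + 1) → ℝ≥0∞) {γ γ' : Feedback W U}
    {n t : ℕ} (c : Hist W U (t + n) → ℝ≥0∞) {h : Hist W U t} (hγ : γ.EqOnExtensions γ' t h) :
    expectedCost ρ γ n t c h = expectedCost ρ γ' n t c h :=
  tsum_congr fun ws => by rw [flowE_congr hγ n ws, probE_congr ρ hγ n ws]

theorem Val_eq_iInf_expectedCost (ρ : ∀ s, Hist W U s → W (s + 1) → ℝ≥0∞) (T : ℕ)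
    (j : Hist W U T → ℝ≥0∞) (n t : ℕ) (e : t + n = T) (h : Hist W U t) :
    Val ρ T j n t e h = ⨅ γ : Feedback W U, expectedCost ρ γ n t (fun x => j (hcast e x)) h :=
  rfl

noncomputable def Feedback.paste [∀ s, Nonempty (U s)] (t : ℕ) (u : U t)
    (φ : W (t + 1) → Feedback W U) : Feedback W U := fun s x =>
  -- after time `t`, follow `φ w` where `w` is the noise `w_{t+1}` recorded in `x`
  if hs : t + 1 ≤ s then φ (Hist.truncate (s - (t + 1)) (t + 1) (hcast (by omega) x)).2.2 s x
  else if hst : s = t then cast (congrArg U hst.symm) u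
  else Classical.arbitrary (U s)

theorem Feedback.paste_self [∀ s, Nonempty (U s)] (t : ℕ) (u : U t)
    (φ : W (t + 1) → Feedback W U) (h : Hist W U t) : Feedback.paste t u φ t h = u := by
  rw [Feedback.paste, dif_neg (by omega), dif_pos rfl]
  rfl

theorem Feedback.paste_eqOnExtensions [∀ s, Nonempty (U s)] {t : ℕ} (u : U t)
    (φ : W (t + 1) → Feedback W U) (h : Hist W U t) (w : W (t + 1)) :
    (Feedback.paste t u φ).EqOnExtensions (φ w) (t + 1) (h, u, w) := by
  intro m x hx
  rw [Feedback.paste, dif_pos (Nat.le_add_right _ _), Hist.truncate_hcast (by omega), hx]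

end

/-- backward induction for value functions with history state (discrete, finite
horizon): `V_t(h_t) = inf_{u_t ∈ U_t} Σ_{w_{t+1} ∈ W_{t+1}} V_{t+1}(h_t,u_t,w_{t+1})
ρ_{t,t+1}(h_t,{w_{t+1}})` for all `t = 0,…,T-1` and `h_t ∈ H_t`. -/
theorem bellman_recursion {W U : ℕ → Type}
    [∀ s, Fintype (W s)] [∀ s, Nonempty (U s)]
    (T : ℕ) (ρ : ∀ s, Hist W U s → W (s + 1) → ℝ≥0∞)
    (hpmf : ∀ s (h : Hist W U s), ∑' w : W (s + 1), ρ s h w = 1)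
    (j : Hist W U T → ℝ≥0∞)
    (n t : ℕ) (e : t + (n + 1) = T) (h : Hist W U t) :
    Val ρ T j (n + 1) t e h
      = ⨅ u : U t, ∑' w : W (t + 1),
          Val ρ T j n (t + 1) (by omega) (h, u, w) * ρ t h w := by
  have hρ : ∀ w, ρ t h w ≠ ∞ := fun w =>
    ne_top_of_le_ne_top ENNReal.one_ne_top (hpmf t h ▸ ENNReal.le_tsum w)
  let C (γ : Feedback W U) (u : U t) (w : W (t + 1)) : ℝ≥0∞ :=
    expectedCost ρ γ n (t + 1) (fun y => j (hcast (by omega : t + 1 + n = T) y)) (h, u, w)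
  calc Val ρ T j (n + 1) t e h = ⨅ γ : Feedback W U, ∑ w, C γ (γ t h) w * ρ t h w := by
        simp only [C, Val_eq_iInf_expectedCost, expectedCost_succ, hcast_hcast_s6, tsum_fintype]
    _ = ⨅ u, ∑ w, (⨅ γ, C γ u w) * ρ t h w :=
        iInf_sum_eq_iInf_sum_iInf (fun γ : Feedback W U => γ t h) (Feedback.paste t) C
          (fun u φ => Feedback.paste_self t u φ h)
          (fun u φ w => expectedCost_congr ρ _ (Feedback.paste_eqOnExtensions u φ h w)) hρ
    _ = _ := by simp only [tsum_fintype]; rfl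
end

section
/- Decision-hazard-decision Bellman operator via spurious noise: let W be a countable set, U♯ and U♭ nonempty sets, ρ a probability mass function on W parameterized by a state x ∈ X. Consider the two-step Bellman composition where the second step uses a kernel concentrated on a one-point noise space (Dirac mass). Then the composed operator equals the single-layer decision-hazard-decision operator: inf_{u♯ ∈ U♯} Σ_{w ∈ W} [ inf_{u♭ ∈ U♭} φ(x, u♯, w, u♭) ] ρ(x, {w}), for every nonnegative φ : X × U♯ × W × U♭ → [0,∞]. In particular, composing the two one-step operators with the Dirac second kernel and then taking the infimum over the inner control commutes into a single expression with the inner infimum under the sum. -/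
open scoped ENNReal

/-- decision-hazard-decision Bellman operator via spurious noise. Composing
the two one-step Bellman operators, where the second step uses a kernel `δ` concentrated on
a one-point noise space (a Dirac mass at `w̄`), equals the single-layer
decision-hazard-decision operator
`inf_{u♯} Σ_w [ inf_{u♭} φ(x,u♯,w,u♭) ] ρ(x,{w})`:
the inner infimum commutes under the sum. -/
theorem dhd_spurious_noise {X Us Ub W Wsp : Type}
    [Countable W] [Countable Wsp] [Nonempty Us] [Nonempty Ub]
    (wbar : Wsp)
    (ρ : X → W → ℝ≥0∞) (hpmf : ∀ x : X, ∑' w : W, ρ x w = 1)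
    (δ : Wsp → ℝ≥0∞) (hδ1 : δ wbar = 1) (hδ0 : ∀ w' : Wsp, w' ≠ wbar → δ w' = 0)
    (φ : X → Us → W → Ub → ℝ≥0∞) (x : X) :
    (⨅ us : Us, ∑' w : W, (⨅ ub : Ub, ∑' wsp : Wsp, φ x us w ub * δ wsp) * ρ x w)
      = ⨅ us : Us, ∑' w : W, (⨅ ub : Ub, φ x us w ub) * ρ x w := by
  have key : ∀ (c : ℝ≥0∞), (∑' wsp : Wsp, c * δ wsp) = c := by
    intro c
    rw [ENNReal.tsum_mul_left]
    have : (∑' wsp : Wsp, δ wsp) = 1 := by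
      rw [tsum_eq_single wbar (fun w' h => hδ0 w' h)]; exact hδ1
    rw [this, mul_one]
  simp only [key]
end

section
/- Equivalence of feedback optimization and adapted-process optimization (finite case): let W_0,...,W_T be finite nonempty sets, U_0,...,U_{T-1} finite nonempty sets, and let the noise (W_0,...,W_T) be a random process on a finite probability space. For each t and history h_t, the infimum over history feedbacks γ_{t:T-1} of the conditional expectation of j evaluated along the flow equals the infimum over all control processes (U_t,...,U_{T-1}) adapted to the noise filtration (σ(U_s) ⊆ σ(W_{t+1},...,W_s)) of E[ j(h_t, U_t, W_{t+1}, ..., U_{T-1}, W_T) | W_{0:t} = uncertainty part of h_t ]. -/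
/-!
Feedbacks and adapted control processes generate the same random histories, pointwise in `ω`,
so the two infima range over the same family of criteria.
A feedback `γ` induces the process `U_s = γ_s(Φ^γ_{t,s})`, adapted because the flow only reads
`W_{t+1}, …, W_s`. Conversely, an adapted process `U` factors through its own history: the
history `Φ^U_{t,s}(ω)` determines `W_{t+1:s}(ω)`, hence `U_s(ω)`, so `U_s` is the value at
`Φ^U_{t,s}` of a history feedback (Doob factorization on the reachable histories).
-/

open scoped ENNReal
open Classical

/-- `agrees Wp t h ω` says that the noise process `(W_0,…,W_t)` at the sample point `ω`
coincides with the uncertainty part `(w_0,…,w_t)` of the history `h ∈ H_t`. -/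
def agrees {W U : ℕ → Type} {Ω : Type} (Wp : ∀ s, Ω → W s) :
    ∀ t, Hist W U t → Ω → Prop
  | 0, h, ω => Wp 0 ω = h
  | t + 1, h, ω => agrees Wp t h.1 ω ∧ Wp (t + 1) ω = h.2.2

/-- Conditional expectation of `F` given the event `c`, on a weighted sample space. -/
noncomputable def condE {Ω : Type} (P : Ω → ℝ≥0∞) (c : Ω → Prop) (F : Ω → ℝ≥0∞) : ℝ≥0∞ :=
  (∑' ω : Ω, if c ω then F ω * P ω else 0) / (∑' ω : Ω, if c ω then P ω else 0)

/-- The random history obtained from `h_t` by iterating a family of history feedbacks `γ`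
along the realized noises `W_{t+1}(ω), …`: `Φ_{t,T}^γ(h_t, W_{t+1:T}(ω))`. -/
def flowRV {W U : ℕ → Type} {Ω : Type} (γ : ∀ s, Hist W U s → U s)
    (Wp : ∀ s, Ω → W s) :
    ∀ (n t : ℕ), Hist W U t → Ω → Hist W U (t + n)
  | 0, _, h, _ => h
  | n + 1, t, h, ω =>
      (flowRV γ Wp n t h ω, γ (t + n) (flowRV γ Wp n t h ω), Wp (t + n + 1) ω)

/-- The random history `(h_t, U_t, W_{t+1}, …, U_{T-1}, W_T)` obtained from `h_t` by a
control process `Up` and the realized noises. -/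
def flowU {W U : ℕ → Type} {Ω : Type} (Up : ∀ s, Ω → U s)
    (Wp : ∀ s, Ω → W s) :
    ∀ (n t : ℕ), Hist W U t → Ω → Hist W U (t + n)
  | 0, _, h, _ => h
  | n + 1, t, h, ω => (flowU Up Wp n t h ω, Up (t + n) ω, Wp (t + n + 1) ω)

def IsAdapted {W U : ℕ → Type} {Ω : Type} (Wp : ∀ s, Ω → W s) (t : ℕ)
    (Up : ∀ s, Ω → U s) : Prop :=
  ∀ (s : ℕ) (ω ω' : Ω), (∀ r, t < r → r ≤ s → Wp r ω = Wp r ω') → Up s ω = Up s ω'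

section FeedbackOfProcess

variable {W U : ℕ → Type} {Ω : Type} (Up : ∀ s, Ω → U s) (Wp : ∀ s, Ω → W s)
  {t : ℕ} (h : Hist W U t)

lemma noise_eq_of_flowU_eq {k : ℕ} {ω ω' : Ω}
    (heq : flowU Up Wp k t h ω = flowU Up Wp k t h ω') :
    ∀ r, t < r → r ≤ t + k → Wp r ω = Wp r ω' := by
  induction k with
  | zero => omega
  | succ k ih =>
    intro r hr hrk
    rcases Nat.lt_or_ge r (t + k + 1) with hlt | hge
    · exact ih (congrArg Prod.fst heq) r hr (by omega)
    · obtain rfl : r = t + k + 1 := by omega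
      exact congrArg (fun p => p.2.2) heq

noncomputable def feedbackOfProcess [∀ s, Nonempty (U s)] : ∀ s, Hist W U s → U s :=
  fun s h' =>
    if hx : ∃ ω : Ω, ∃ k : ℕ, ∃ hk : t + k = s, hcast hk (flowU Up Wp k t h ω) = h' then
      Up s hx.choose
    else Classical.arbitrary _

variable [∀ s, Nonempty (U s)] {Up Wp}

lemma feedbackOfProcess_flowU (had : IsAdapted Wp t Up) (k : ℕ) (ω : Ω) :
    feedbackOfProcess Up Wp h (t + k) (flowU Up Wp k t h ω) = Up (t + k) ω := by
  have hx : ∃ ω' : Ω, ∃ k' : ℕ, ∃ hk : t + k' = t + k,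
      hcast hk (flowU Up Wp k' t h ω') = flowU Up Wp k t h ω :=
    ⟨ω, k, rfl, rfl⟩
  rw [feedbackOfProcess, dif_pos hx]
  obtain ⟨k', hk, hflow⟩ := hx.choose_spec
  obtain rfl : k' = k := by omega
  exact had _ _ ω (noise_eq_of_flowU_eq Up Wp h hflow)

lemma flowRV_feedbackOfProcess (had : IsAdapted Wp t Up) (k : ℕ) (ω : Ω) :
    flowRV (feedbackOfProcess Up Wp h) Wp k t h ω = flowU Up Wp k t h ω := by
  induction k with
  | zero => rfl
  | succ k ih =>
    show (_, _, _) = (_, _, _)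
    rw [ih, feedbackOfProcess_flowU h had]

end FeedbackOfProcess

section ProcessOfFeedback

variable {W U : ℕ → Type} {Ω : Type} (γ : ∀ s, Hist W U s → U s) (Wp : ∀ s, Ω → W s)
  {t : ℕ} (h : Hist W U t)

lemma hcast_flowRV {k k' : ℕ} (hk : k = k') (e : t + k = t + k') (ω : Ω) :
    hcast e (flowRV γ Wp k t h ω) = flowRV γ Wp k' t h ω := by
  subst hk; rfl

lemma flowRV_eq_of_noise_eq {k : ℕ} {ω ω' : Ω}
    (hw : ∀ r, t < r → r ≤ t + k → Wp r ω = Wp r ω') :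
    flowRV γ Wp k t h ω = flowRV γ Wp k t h ω' := by
  induction k with
  | zero => rfl
  | succ k ih =>
    show (_, _, _) = (_, _, _)
    rw [ih fun r hr hrk => hw r hr (by omega), hw (t + k + 1) (by omega) le_rfl]

noncomputable def processOfFeedback [∀ s, Nonempty (U s)] : ∀ s, Ω → U s :=
  fun s ω =>
    if hs : t ≤ s then γ s (hcast (Nat.add_sub_cancel' hs) (flowRV γ Wp (s - t) t h ω))
    else Classical.arbitrary _

variable [∀ s, Nonempty (U s)]

lemma isAdapted_processOfFeedback : IsAdapted Wp t (processOfFeedback γ Wp h) := by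
  intro s ω ω' hw
  unfold processOfFeedback
  split_ifs with hs
  · rw [flowRV_eq_of_noise_eq γ Wp h fun r hr hrs => hw r hr (by omega)]
  · rfl

lemma flowU_processOfFeedback (k : ℕ) (ω : Ω) :
    flowU (processOfFeedback γ Wp h) Wp k t h ω = flowRV γ Wp k t h ω := by
  induction k with
  | zero => rfl
  | succ k ih =>
    show (_, _, _) = (_, _, _)
    rw [ih, processOfFeedback, dif_pos (Nat.le_add_right t k),
      hcast_flowRV γ Wp h (Nat.add_sub_cancel_left t k)]

end ProcessOfFeedback

theorem feedback_vs_adapted_general {W U : ℕ → Type} [∀ s, Nonempty (U s)] {Ω : Type}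
    (P : Ω → ℝ≥0∞) (Wp : ∀ s, Ω → W s) (T : ℕ) (j : Hist W U T → ℝ≥0∞)
    (n t : ℕ) (e : t + n = T) (h : Hist W U t) :
    (⨅ γ : ∀ s, Hist W U s → U s,
        condE P (agrees Wp t h) (fun ω => j (hcast e (flowRV γ Wp n t h ω))))
      = ⨅ Up : {Up : ∀ s, Ω → U s //
            ∀ (s : ℕ) (ω ω' : Ω),
              (∀ r, t < r → r ≤ s → Wp r ω = Wp r ω') → Up s ω = Up s ω'},
          condE P (agrees Wp t h) (fun ω => j (hcast e (flowU Up.1 Wp n t h ω))) := by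
  apply le_antisymm
  · refine iInf_mono' fun Up => ⟨feedbackOfProcess Up.1 Wp h, le_of_eq ?_⟩
    simp_rw [flowRV_feedbackOfProcess h Up.2]
  · refine iInf_mono' fun γ =>
      ⟨⟨processOfFeedback γ Wp h, isAdapted_processOfFeedback γ Wp h⟩, le_of_eq ?_⟩
    simp_rw [flowU_processOfFeedback]

/-- equivalence of feedback optimization and adapted-process optimization
(finite case). For each `t` and history `h_t` (with conditioning event of positive
probability), the infimum over history feedbacks `γ` of
`E[ j(Φ_{t,T}^γ(h_t, W_{t+1:T})) | W_{0:t} = unc(h_t) ]` equals the infimum over all control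
processes `(U_t,…,U_{T-1})` adapted to the noise filtration (`σ(U_s) ⊆ σ(W_{t+1},…,W_s)`,
so that `U_t` is deterministic) of
`E[ j(h_t, U_t, W_{t+1}, …, U_{T-1}, W_T) | W_{0:t} = unc(h_t) ]`. -/
theorem feedback_vs_adapted {W U : ℕ → Type}
    [∀ s, Fintype (W s)] [∀ s, Nonempty (W s)] [∀ s, Fintype (U s)] [∀ s, Nonempty (U s)]
    {Ω : Type} [Fintype Ω] [Nonempty Ω]
    (P : Ω → ℝ≥0∞) (hP : ∑' ω : Ω, P ω = 1)
    (Wp : ∀ s, Ω → W s)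
    (T : ℕ) (j : Hist W U T → ℝ≥0∞)
    (n t : ℕ) (e : t + n = T) (h : Hist W U t)
    (hpos : 0 < ∑' ω : Ω, if agrees Wp t h ω then P ω else 0) :
    (⨅ γ : ∀ s, Hist W U s → U s,
        condE P (agrees Wp t h) (fun ω => j (hcast e (flowRV γ Wp n t h ω))))
      = ⨅ Up : {Up : ∀ s, Ω → U s //
            ∀ (s : ℕ) (ω ω' : Ω),
              (∀ r, t < r → r ≤ s → Wp r ω = Wp r ω') → Up s ω = Up s ω'},
          condE P (agrees Wp t h) (fun ω => j (hcast e (flowU Up.1 Wp n t h ω))) :=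
  feedback_vs_adapted_general P Wp T j n t e h
end
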